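/- Let n ≥ 1, let Σ be an n×n real symmetric positive semidefinite matrix and Ω an n×n real symmetric positive definite matrix. Then the Kyle cross-impact matrix Λ_kyle(Σ,Ω) := (√Ω)⁻¹ · √(√Ω Σ √Ω) · (√Ω)⁻¹ is symmetric, positive semidefinite, and satisfies the return covariance consistency identity Λ_kyle(Σ,Ω) · Ω · Λ_kyle(Σ,Ω)ᵀ = Σ. -/

import Mathlib

open Matrix
open scoped Classical

/-- `sqrtm A` is the unique symmetric positive semidefinite square root of a
symmetric positive semidefinite real matrix `A` (junk value `0` otherwise). -/
noncomputable def sqrtm {n : ℕ} (A : Matrix (Fin n) (Fin n) ℝ) : Matrix (Fin n) (Fin n) ℝ :=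
  if h : A.PosSemidef then
    (h.1.eigenvectorUnitary : Matrix (Fin n) (Fin n) ℝ) *
      diagonal ((↑) ∘ (h.1.eigenvalues · |>.sqrt)) *
      (star h.1.eigenvectorUnitary : Matrix (Fin n) (Fin n) ℝ)
  else 0

/-- The Kyle cross-impact matrix `Λ_kyle(Σ,Ω) = (√Ω)⁻¹ √(√Ω Σ √Ω) (√Ω)⁻¹`. -/
noncomputable def kyle {n : ℕ} (S W : Matrix (Fin n) (Fin n) ℝ) : Matrix (Fin n) (Fin n) ℝ :=
  (sqrtm W)⁻¹ * sqrtm (sqrtm W * S * sqrtm W) * (sqrtm W)⁻¹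

/-!
Write `R = √Ω` and `B = √(R Σ R)`, so that `Λ = R⁻¹ B R⁻¹`. Since `R` is symmetric, `Λ` is a
congruence transform of the positive semidefinite matrix `B`, hence symmetric positive
semidefinite. As `Ω = R R` and `B B = R Σ R`, the product `Λ Ω Λ` telescopes to
`R⁻¹ (R Σ R) R⁻¹ = Σ`.
-/

variable {n : ℕ}

theorem sqrtm_eq_conjStarAlgAut {A : Matrix (Fin n) (Fin n) ℝ} (hA : A.PosSemidef) :
    sqrtm A = Unitary.conjStarAlgAut ℝ _ hA.1.eigenvectorUnitary
      (diagonal ((↑) ∘ (hA.1.eigenvalues · |>.sqrt))) := by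
  rw [sqrtm, dif_pos hA, Unitary.conjStarAlgAut_apply]

-- Unconditional: the junk value `0` of `sqrtm` is positive semidefinite as well.
theorem posSemidef_sqrtm (A : Matrix (Fin n) (Fin n) ℝ) : (sqrtm A).PosSemidef := by
  by_cases hA : A.PosSemidef
  · rw [sqrtm_eq_conjStarAlgAut hA, Unitary.conjStarAlgAut_apply]
    exact (PosSemidef.diagonal fun i => by simp [Real.sqrt_nonneg]).mul_mul_conjTranspose_same _
  · rw [sqrtm, dif_neg hA]
    exact PosSemidef.zero

theorem sqrtm_mul_self {A : Matrix (Fin n) (Fin n) ℝ} (hA : A.PosSemidef) :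
    sqrtm A * sqrtm A = A := by
  conv_rhs => rw [hA.1.spectral_theorem]
  rw [sqrtm_eq_conjStarAlgAut hA, ← map_mul, diagonal_mul_diagonal]
  congr 2; funext i
  simp [Real.mul_self_sqrt (hA.eigenvalues_nonneg i)]

theorem isUnit_det_sqrtm {W : Matrix (Fin n) (Fin n) ℝ} (hW : W.PosDef) :
    IsUnit (sqrtm W).det := by
  have hdet : (sqrtm W).det * (sqrtm W).det = W.det := by
    rw [← det_mul, sqrtm_mul_self hW.posSemidef]
  exact isUnit_of_mul_isUnit_left (hdet ▸ hW.det_pos.ne'.isUnit)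

theorem posSemidef_kyle (S W : Matrix (Fin n) (Fin n) ℝ) : (kyle S W).PosSemidef := by
  have hRinv : ((sqrtm W)⁻¹)ᴴ = (sqrtm W)⁻¹ := (posSemidef_sqrtm W).isHermitian.inv.eq
  simpa only [kyle, hRinv] using
    (posSemidef_sqrtm (sqrtm W * S * sqrtm W)).mul_mul_conjTranspose_same (sqrtm W)⁻¹

theorem isSymm_kyle (S W : Matrix (Fin n) (Fin n) ℝ) : (kyle S W).IsSymm := by
  simpa only [IsSymm, conjTranspose_eq_transpose_of_trivial] using
    (posSemidef_kyle S W).isHermitian.eq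

theorem kyle_mul_mul_kyle {S W : Matrix (Fin n) (Fin n) ℝ} (hS : S.PosSemidef) (hW : W.PosDef) :
    kyle S W * W * kyle S W = S := by
  set R := sqrtm W
  set B := sqrtm (R * S * R)
  have hR : IsUnit R.det := isUnit_det_sqrtm hW
  have hRH : Rᴴ = R := (posSemidef_sqrtm W).isHermitian.eq
  have hRR : R * R = W := sqrtm_mul_self hW.posSemidef
  have hBB : B * B = R * S * R :=
    sqrtm_mul_self (by simpa only [hRH] using hS.mul_mul_conjTranspose_same R)
  calc kyle S W * W * kyle S W
      = R⁻¹ * B * R⁻¹ * (R * R) * (R⁻¹ * B * R⁻¹) := by rw [hRR]; rfl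
    _ = R⁻¹ * B * (R⁻¹ * R) * (R * R⁻¹) * B * R⁻¹ := by simp only [Matrix.mul_assoc]
    _ = R⁻¹ * (B * B) * R⁻¹ := by
        simp only [nonsing_inv_mul R hR, mul_nonsing_inv R hR, Matrix.mul_one, Matrix.mul_assoc]
    _ = S := by
        simp only [hBB, ← Matrix.mul_assoc, nonsing_inv_mul R hR, Matrix.one_mul]
        simp only [Matrix.mul_assoc, mul_nonsing_inv R hR, Matrix.mul_one]

theorem kyle_isSymm_posSemidef_covConsistent_general {n : ℕ}
    (S W : Matrix (Fin n) (Fin n) ℝ) (hS : S.PosSemidef) (hW : W.PosDef) :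
    (kyle S W).IsSymm ∧ (kyle S W).PosSemidef ∧ kyle S W * W * (kyle S W)ᵀ = S := by
  refine ⟨isSymm_kyle S W, posSemidef_kyle S W, ?_⟩
  rw [(isSymm_kyle S W).eq]
  exact kyle_mul_mul_kyle hS hW

/-- the Kyle cross-impact matrix is symmetric, positive semidefinite and
return covariance consistent. -/
theorem kyle_isSymm_posSemidef_covConsistent {n : ℕ} (hn : 1 ≤ n)
    (S W : Matrix (Fin n) (Fin n) ℝ) (hS : S.PosSemidef) (hW : W.PosDef) :
    (kyle S W).IsSymm ∧ (kyle S W).PosSemidef ∧ kyle S W * W * (kyle S W)ᵀ = S :=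
  kyle_isSymm_posSemidef_covConsistent_general S W hS hW
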